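/- arXiv:math-ph/0702050 — 7 statements merged into one kernel-verified Lean document; each statement's English description precedes it below -/
import Mathlib

section
/- Let Φ = (a; b) be a 2L×L complex matrix of rank L satisfying the Lagrangian condition Φ*JΦ = 0, where J = ((0, -1),(1, 0)) is the standard symplectic form. Then the L×L matrices a + ib and a - ib both have rank L (i.e., are invertible). -/
open Matrix

noncomputable section

/-- The standard symplectic form `J = ((0,-1),(1,0))` in `L × L` blocks. -/
def Jmat (L : ℕ) : Matrix (Fin L ⊕ Fin L) (Fin L ⊕ Fin L) ℂ :=
  Matrix.fromBlocks 0 (-1) 1 0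

/-!
Write `C = a* a + b* b`, which is invertible because `Φ` has full column rank and `C = Φ* Φ`.
The Lagrangian condition says exactly that `a* b = b* a`, so the cross terms cancel in
`(a ± i b)* (a ± i b) = a* a + b* b ± i (a* b - b* a) = C`.
Hence `det (a ± i b)` divides the unit `det C`.
-/

namespace Matrix

theorem conjTranspose_fromRows_mul_fromRows {m₁ m₂ n R : Type*} [Fintype m₁] [Fintype m₂]
    [Semiring R] [StarRing R] (a : Matrix m₁ n R) (b : Matrix m₂ n R) :
    (fromRows a b)ᴴ * fromRows a b = aᴴ * a + bᴴ * b := by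
  rw [conjTranspose_fromRows_eq_fromCols_conjTranspose, fromCols_mul_fromRows]

variable {m n K : Type*} [Fintype n] [DecidableEq n]

theorem isUnit_of_rank_eq_card [Field K] (A : Matrix n n K) (h : A.rank = Fintype.card n) :
    IsUnit A := by
  have hrange : LinearMap.range A.mulVecLin = ⊤ :=
    Submodule.eq_top_of_finrank_eq (by rw [Module.finrank_fintype_fun_eq_card, ← h]; rfl)
  exact mulVec_surjective_iff_isUnit.mp (LinearMap.range_eq_top.mp hrange)

theorem isUnit_conjTranspose_mul_self_of_rank_eq_card [Fintype m] [Field K] [PartialOrder K]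
    [StarRing K] [StarOrderedRing K] (A : Matrix m n K) (h : A.rank = Fintype.card n) :
    IsUnit (Aᴴ * A) :=
  isUnit_of_rank_eq_card _ (by rw [rank_conjTranspose_mul_self, h])

theorem isUnit_of_isUnit_conjTranspose_mul_self [CommRing K] [StarRing K] {A : Matrix n n K}
    (h : IsUnit (Aᴴ * A)) : IsUnit A := by
  rw [isUnit_iff_isUnit_det] at h ⊢
  rw [det_mul] at h
  exact isUnit_of_mul_isUnit_right h

end Matrix

theorem conjTranspose_fromRows_mul_Jmat_mul_fromRows {L : ℕ} (a b : Matrix (Fin L) (Fin L) ℂ) :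
    (fromRows a b)ᴴ * Jmat L * fromRows a b = bᴴ * a - aᴴ * b := by
  rw [Jmat, conjTranspose_fromRows_eq_fromCols_conjTranspose, fromCols_mul_fromBlocks,
    fromCols_mul_fromRows]
  simp [sub_eq_add_neg]

theorem conjTranspose_mul_self_add_smul {n : Type*} [Fintype n] {a b : Matrix n n ℂ}
    (hab : aᴴ * b = bᴴ * a) {z : ℂ} (hz : z.re = 0) :
    (a + z • b)ᴴ * (a + z • b) = aᴴ * a + (Complex.normSq z : ℂ) • (bᴴ * b) := by
  have hconj : star z = -z := by
    apply Complex.ext <;> simp [hz]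
  have hnorm : (Complex.normSq z : ℂ) = -z * z := by
    rw [Complex.normSq_eq_conj_mul_self, ← hconj]; rfl
  simp only [conjTranspose_add, conjTranspose_smul, hconj, add_mul, mul_add, smul_mul,
    Matrix.mul_smul, hab]
  rw [smul_smul, hnorm]
  match_scalars <;> ring

/-- If `Φ = (a; b)` has rank `L` and satisfies the Lagrangian condition `Φ* J Φ = 0`,
then `a + i b` and `a - i b` are invertible. -/
theorem stmt0 (L : ℕ) (a b : Matrix (Fin L) (Fin L) ℂ)
    (hrank : (Matrix.fromRows a b).rank = L)
    (hLag : (Matrix.fromRows a b)ᴴ * Jmat L * Matrix.fromRows a b = 0) :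
    IsUnit (a + Complex.I • b) ∧ IsUnit (a - Complex.I • b) := by
  have hC : IsUnit (aᴴ * a + bᴴ * b) := by
    open scoped ComplexOrder in
    rw [← conjTranspose_fromRows_mul_fromRows]
    exact isUnit_conjTranspose_mul_self_of_rank_eq_card _ (by rwa [Fintype.card_fin])
  have hab : aᴴ * b = bᴴ * a :=
    (sub_eq_zero.mp (conjTranspose_fromRows_mul_Jmat_mul_fromRows a b ▸ hLag)).symm
  have key {z : ℂ} (hre : z.re = 0) (hnorm : Complex.normSq z = 1) : IsUnit (a + z • b) := by
    apply isUnit_of_isUnit_conjTranspose_mul_self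
    rwa [conjTranspose_mul_self_add_smul hab hre, hnorm, Complex.ofReal_one, one_smul]
  rw [sub_eq_add_neg, ← neg_smul]
  exact ⟨key Complex.I_re Complex.normSq_I, key (by simp) (by simp)⟩
end
end

section
/- Let T = ((A,B),(C,D)) ∈ U(L,L) (i.e., T*GT = G with G = diag(1,-1) in L×L blocks) and let U be an L×L matrix with U*U ≤ 1. Then CU + D is invertible, and the identity (CU+D)*(CU+D) - (AU+B)*(AU+B) = 1 - U*U holds. Consequently the Möbius transform T·U = (AU+B)(CU+D)^{-1} satisfies (T·U)*(T·U) ≤ 1, and if U*U = 1 (U unitary) then T·U is unitary. -/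
open Matrix
open scoped ComplexOrder

noncomputable section

def Gmat (L : ℕ) : Matrix (Fin L ⊕ Fin L) (Fin L ⊕ Fin L) ℂ :=
  Matrix.fromBlocks 1 0 0 (-1)

/-!
Writing `V = CU + D` and `W = AU + B`, the block relations of `T ∈ U(L,L)` give
`VᴴV - WᴴW = 1 - UᴴU` by pure expansion. If `Vv = 0`, then
`0 = vᴴ(1 - UᴴU)v + ‖Wv‖²` forces `Wv = 0`, so `T` kills `(Uv, v)`; since `T` is invertible,
`v = 0`. Finally `1 - (WV⁻¹)ᴴ(WV⁻¹) = (V⁻¹)ᴴ(1 - UᴴU)V⁻¹`, which is positive semidefinite,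
and zero when `U` is unitary.
-/

theorem star_mul_self_sub_star_mul_self_of_pseudoUnitary {R : Type*} [Ring R] [StarRing R]
    {A B C D : R} (hAC : star A * A - star C * C = 1) (hAB : star A * B = star C * D)
    (hDB : star D * D - star B * B = 1) (U : R) :
    star (C * U + D) * (C * U + D) - star (A * U + B) * (A * U + B) = 1 - star U * U := by
  have hBA : star B * A = star D * C := by simpa using congrArg star hAB
  simp only [star_add, star_mul]
  linear_combination (norm := noncomm_ring) -(star U * hAC * U) - star U * hAB - hBA * U + hDB

namespace Matrix

variable {m n l o α : Type*} [Fintype n] [Fintype l]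

theorem isUnit_of_conjTranspose_mul_mul_self_eq [DecidableEq n] [CommRing α] [StarRing α]
    {G M : Matrix n n α} (hG : IsUnit G) (h : Mᴴ * G * M = G) : IsUnit M := by
  have hleft : (G⁻¹ * Mᴴ * G) * M = 1 := by
    rw [Matrix.mul_assoc G⁻¹, Matrix.mul_assoc G⁻¹, h,
      nonsing_inv_mul G ((isUnit_iff_isUnit_det G).mp hG)]
  exact (isUnit_iff_isUnit_det M).mpr (isUnit_det_of_left_inverse hleft)

theorem fromBlocks_mulVec_sum_elim [NonUnitalSemiring α] (A : Matrix m n α) (B : Matrix m l α)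
    (C : Matrix o n α) (D : Matrix o l α) (U : Matrix n l α) (v : l → α) :
    fromBlocks A B C D *ᵥ Sum.elim (U *ᵥ v) v = Sum.elim ((A * U + B) *ᵥ v) ((C * U + D) *ᵥ v) := by
  rw [fromBlocks_mulVec, Sum.elim_comp_inl, Sum.elim_comp_inr, add_mulVec, add_mulVec,
    mulVec_mulVec, mulVec_mulVec]

theorem one_sub_conjTranspose_mul_self_mul_inv [Fintype m] [DecidableEq n] [CommRing α]
    [StarRing α] {V : Matrix n n α} (hV : IsUnit V) (W : Matrix m n α) :
    1 - (W * V⁻¹)ᴴ * (W * V⁻¹) = (V⁻¹)ᴴ * (Vᴴ * V - Wᴴ * W) * V⁻¹ := by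
  have hVV : V * V⁻¹ = 1 := mul_nonsing_inv V ((isUnit_iff_isUnit_det V).mp hV)
  have hVV' : (V⁻¹)ᴴ * Vᴴ = 1 := by rw [← conjTranspose_mul, hVV, conjTranspose_one]
  rw [conjTranspose_mul, Matrix.mul_sub, Matrix.sub_mul, ← Matrix.mul_assoc (V⁻¹)ᴴ, hVV',
    Matrix.one_mul, Matrix.mul_assoc, hVV]
  simp only [Matrix.mul_assoc]

theorem star_dotProduct_conjTranspose_mul_self_mulVec [Fintype m] [NonUnitalSemiring α]
    [StarRing α] (X : Matrix m n α) (v : n → α) :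
    star v ⬝ᵥ (Xᴴ * X) *ᵥ v = star (X *ᵥ v) ⬝ᵥ X *ᵥ v := by
  rw [← mulVec_mulVec, dotProduct_mulVec, ← star_mulVec]

variable {𝕜 : Type*} [RCLike 𝕜]

theorem mulVec_eq_zero_of_conjTranspose_mul_self_eq_add [Fintype m] [Fintype o]
    {M : Matrix m n 𝕜} {N : Matrix o n 𝕜} {P : Matrix n n 𝕜}
    (hP : P.PosSemidef) (h : Mᴴ * M = P + Nᴴ * N) {v : n → 𝕜} (hv : M *ᵥ v = 0) :
    N *ᵥ v = 0 := by
  have hsum : star v ⬝ᵥ P *ᵥ v + star (N *ᵥ v) ⬝ᵥ N *ᵥ v = 0 := by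
    rw [← star_dotProduct_conjTranspose_mul_self_mulVec, ← dotProduct_add, ← add_mulVec, ← h,
      star_dotProduct_conjTranspose_mul_self_mulVec, hv, dotProduct_zero]
  have hNv := (add_eq_zero_iff_of_nonneg (hP.dotProduct_mulVec_nonneg v)
    (dotProduct_star_self_nonneg _)).mp hsum
  exact dotProduct_star_self_eq_zero.mp hNv.2

theorem isUnit_mul_add_of_posSemidef_one_sub [DecidableEq n] {A B C D U : Matrix n n 𝕜}
    (hT : IsUnit (fromBlocks A B C D)) (hU : (1 - Uᴴ * U).PosSemidef)
    (hkey : (C * U + D)ᴴ * (C * U + D) - (A * U + B)ᴴ * (A * U + B) = 1 - Uᴴ * U) :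
    IsUnit (C * U + D) := by
  rw [← mulVec_injective_iff_isUnit, ← coe_mulVecLin, injective_iff_map_eq_zero]
  intro v hv
  rw [coe_mulVecLin] at hv
  have hW : (A * U + B) *ᵥ v = 0 :=
    mulVec_eq_zero_of_conjTranspose_mul_self_eq_add hU (sub_eq_iff_eq_add.mp hkey) hv
  have hker : fromBlocks A B C D *ᵥ Sum.elim (U *ᵥ v) v = 0 := by
    rw [fromBlocks_mulVec_sum_elim, hW, hv, Sum.elim_zero_zero]
  have hzero := (mulVec_injective_iff_isUnit.mpr hT) (hker.trans (mulVec_zero _).symm)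
  exact funext fun i => congrFun hzero (Sum.inr i)

end Matrix

theorem isUnit_Gmat (L : ℕ) : IsUnit (Gmat L) := by
  have hG : Gmat L * Gmat L = 1 := by simp [Gmat, fromBlocks_multiply, ← fromBlocks_one]
  exact (isUnit_iff_isUnit_det _).mpr (isUnit_det_of_left_inverse hG)

theorem blocks_of_conjTranspose_mul_Gmat_mul_eq {L : ℕ} {A B C D : Matrix (Fin L) (Fin L) ℂ}
    (hT : (fromBlocks A B C D)ᴴ * Gmat L * fromBlocks A B C D = Gmat L) :
    Aᴴ * A - Cᴴ * C = 1 ∧ Aᴴ * B = Cᴴ * D ∧ Dᴴ * D - Bᴴ * B = 1 := by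
  simp only [Gmat, fromBlocks_conjTranspose, fromBlocks_multiply, Matrix.mul_one, Matrix.mul_zero,
    Matrix.mul_neg, Matrix.neg_mul, add_zero, zero_add, fromBlocks_inj] at hT
  simp only [← sub_eq_add_neg] at hT
  obtain ⟨h1, h2, -, h4⟩ := hT
  exact ⟨h1, sub_eq_zero.mp h2, by rw [← neg_sub, h4, neg_neg]⟩

/-- For `T = ((A,B),(C,D)) ∈ U(L,L)` and `U` with `U*U ≤ 1`: `CU + D` is invertible,
the crucial identity `(CU+D)*(CU+D) - (AU+B)*(AU+B) = 1 - U*U` holds, the Möbius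
transform `T·U = (AU+B)(CU+D)⁻¹` satisfies `(T·U)*(T·U) ≤ 1`, and if `U` is unitary
then so is `T·U`. -/
theorem stmt8 (L : ℕ) (A B C D U : Matrix (Fin L) (Fin L) ℂ)
    (hT : (Matrix.fromBlocks A B C D)ᴴ * Gmat L * Matrix.fromBlocks A B C D = Gmat L)
    (hU : (1 - Uᴴ * U).PosSemidef) :
    IsUnit (C * U + D) ∧
    (C * U + D)ᴴ * (C * U + D) - (A * U + B)ᴴ * (A * U + B) = 1 - Uᴴ * U ∧
    (1 - ((A * U + B) * (C * U + D)⁻¹)ᴴ * ((A * U + B) * (C * U + D)⁻¹)).PosSemidef ∧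
    (Uᴴ * U = 1 → (A * U + B) * (C * U + D)⁻¹ ∈ Matrix.unitaryGroup (Fin L) ℂ) := by
  obtain ⟨hAC, hAB, hDB⟩ := blocks_of_conjTranspose_mul_Gmat_mul_eq hT
  have key := star_mul_self_sub_star_mul_self_of_pseudoUnitary hAC hAB hDB U
  simp only [star_eq_conjTranspose] at key
  have hTunit := isUnit_of_conjTranspose_mul_mul_self_eq (isUnit_Gmat L) hT
  have hV := isUnit_mul_add_of_posSemidef_one_sub hTunit hU key
  have hmoebius := one_sub_conjTranspose_mul_self_mul_inv hV (A * U + B)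
  rw [key] at hmoebius
  refine ⟨hV, key, hmoebius ▸ hU.conjTranspose_mul_mul_same _, fun hUU => ?_⟩
  rw [hUU, sub_self, Matrix.mul_zero, Matrix.zero_mul, sub_eq_zero] at hmoebius
  rw [mem_unitaryGroup_iff', star_eq_conjTranspose, ← hmoebius]
end
end

section
/- Let T = ((A,B),(C,D)) ∈ U(L,L) and let U be a matrix with U*U ≤ 1 such that rank(1 - U*U) = L - l. Then the Möbius transform T·U = (AU+B)(CU+D)^{-1} also satisfies rank(1 - (T·U)*(T·U)) = L - l. In other words, the Möbius action of U(L,L) preserves each stratum of the boundary of the matrix unit disc. -/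
/-!
Write `T·U = P M⁻¹` with `P = AU + B` and `M = CU + D`. Expanding the block form of
`Tᴴ G T = G` gives the identity `MᴴM = PᴴP + (1 - UᴴU)`. If `Mv = 0`, the positivity of
both summands forces `Pv = 0`, so `T` kills the vector `(Uv, v)`; as `T` is invertible,
`v = 0` and `M` is invertible. Multiplying the identity by `M⁻¹ᴴ` and `M⁻¹` then gives
`1 - (T·U)ᴴ(T·U) = M⁻¹ᴴ (1 - UᴴU) M⁻¹`, a congruence, which preserves rank.
-/

open Matrix
open scoped ComplexOrder

noncomputable section

theorem star_mobius_denominator_mul_self {R : Type*} [Ring R] [StarRing R] {a b c d u : R}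
    (h₁₁ : star a * a - star c * c = 1) (h₁₂ : star a * b - star c * d = 0)
    (h₂₂ : star b * b - star d * d = -1) :
    star (c * u + d) * (c * u + d) = star (a * u + b) * (a * u + b) + (1 - star u * u) := by
  have h₂₁ : star b * a - star d * c = 0 := by
    simpa only [star_sub, star_mul, star_star, star_zero] using congrArg star h₁₂
  have expand : star (c * u + d) * (c * u + d) - star (a * u + b) * (a * u + b) =
      -(star u * (star a * a - star c * c) * u) - star u * (star a * b - star c * d)
        - (star b * a - star d * c) * u - (star b * b - star d * d) := by
    simp only [star_add, star_mul]
    noncomm_ring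
  rw [h₁₁, h₁₂, h₂₁, h₂₂] at expand
  linear_combination (norm := noncomm_ring) expand

theorem fromBlocks_conjTranspose_mul_Gmat_mul {L : ℕ} (A B C D : Matrix (Fin L) (Fin L) ℂ) :
    (fromBlocks A B C D)ᴴ * Gmat L * fromBlocks A B C D =
      fromBlocks (Aᴴ * A - Cᴴ * C) (Aᴴ * B - Cᴴ * D) (Bᴴ * A - Dᴴ * C) (Bᴴ * B - Dᴴ * D) := by
  simp [Gmat, fromBlocks_conjTranspose, fromBlocks_multiply, sub_eq_add_neg]

theorem isUnit_det_Gmat (L : ℕ) : IsUnit (Gmat L).det := by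
  simp [Gmat, det_fromBlocks_zero₂₁, det_neg]

theorem isUnit_det_of_conjTranspose_mul_mul_eq {n R : Type*} [Fintype n] [DecidableEq n]
    [CommRing R] [StarRing R] {T G : Matrix n n R} (hG : IsUnit G.det) (hT : Tᴴ * G * T = G) :
    IsUnit T.det := by
  rw [← hT, det_mul, det_mul] at hG
  exact isUnit_of_mul_isUnit_right hG

theorem mulVec_eq_zero_of_conjTranspose_mul_self_eq_add {𝕜 m n k : Type*} [RCLike 𝕜]
    [Fintype m] [Fintype n] [Fintype k] {M : Matrix m n 𝕜} {P : Matrix k n 𝕜}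
    {Q : Matrix n n 𝕜} (hQ : Q.PosSemidef) (h : Mᴴ * M = Pᴴ * P + Q) {v : n → 𝕜}
    (hv : M *ᵥ v = 0) : P *ᵥ v = 0 := by
  have hsum : star (P *ᵥ v) ⬝ᵥ (P *ᵥ v) + star v ⬝ᵥ (Q *ᵥ v) = 0 := by
    have hM : star v ⬝ᵥ ((Mᴴ * M) *ᵥ v) = 0 := by
      rw [← mulVec_mulVec, hv, mulVec_zero, dotProduct_zero]
    rwa [h, add_mulVec, dotProduct_add, ← mulVec_mulVec, dotProduct_mulVec, ← star_mulVec] at hM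
  have hP : star (P *ᵥ v) ⬝ᵥ (P *ᵥ v) = 0 :=
    le_antisymm (eq_neg_of_add_eq_zero_left hsum ▸ neg_nonpos.mpr (hQ.dotProduct_mulVec_nonneg v))
      (dotProduct_star_self_nonneg _)
  exact dotProduct_star_self_eq_zero.mp hP

theorem isUnit_det_mobius_denominator {n K : Type*} [Fintype n] [DecidableEq n] [Field K]
    {A B C D U : Matrix n n K} (hT : IsUnit (fromBlocks A B C D).det)
    (hker : ∀ v, (C * U + D) *ᵥ v = 0 → (A * U + B) *ᵥ v = 0) : IsUnit (C * U + D).det := by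
  rw [isUnit_iff_ne_zero]
  intro hdet
  obtain ⟨v, hv0, hv⟩ := exists_mulVec_eq_zero_iff.mpr hdet
  have hTv : fromBlocks A B C D *ᵥ Sum.elim (U *ᵥ v) v = 0 := by
    simp only [fromBlocks_mulVec, Sum.elim_comp_inl, Sum.elim_comp_inr, mulVec_mulVec,
      ← add_mulVec, hv, hker v hv, Sum.elim_zero_zero]
  have := (mulVec_injective_iff_isUnit.mpr ((isUnit_iff_isUnit_det _).mpr hT))
    (hTv.trans (mulVec_zero _).symm)
  exact hv0 (funext fun i => congrFun this (Sum.inr i))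

theorem one_sub_conjTranspose_mul_self_mul_inv {n R : Type*} [Fintype n] [DecidableEq n]
    [CommRing R] [StarRing R] {M P Q : Matrix n n R} (hM : IsUnit M.det)
    (h : Mᴴ * M = Pᴴ * P + Q) : 1 - (P * M⁻¹)ᴴ * (P * M⁻¹) = M⁻¹ᴴ * Q * M⁻¹ := by
  have hMH : Mᴴ⁻¹ * Mᴴ = 1 := nonsing_inv_mul _ (by rwa [det_conjTranspose, isUnit_star])
  calc 1 - (P * M⁻¹)ᴴ * (P * M⁻¹)
      = Mᴴ⁻¹ * Mᴴ * (M * M⁻¹) - Mᴴ⁻¹ * (Pᴴ * P) * M⁻¹ := by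
        rw [hMH, mul_nonsing_inv _ hM, conjTranspose_mul, conjTranspose_nonsing_inv]
        noncomm_ring
    _ = Mᴴ⁻¹ * (Mᴴ * M - Pᴴ * P) * M⁻¹ := by noncomm_ring
    _ = M⁻¹ᴴ * Q * M⁻¹ := by rw [h, add_sub_cancel_left, conjTranspose_nonsing_inv]

theorem rank_conjTranspose_mul_mul_of_isUnit_det {n K : Type*} [Fintype n] [DecidableEq n]
    [Field K] [StarRing K] {M : Matrix n n K} (hM : IsUnit M.det) (Q : Matrix n n K) :
    (Mᴴ * Q * M).rank = Q.rank := by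
  rw [rank_mul_eq_left_of_isUnit_det _ _ hM,
    rank_mul_eq_right_of_isUnit_det _ _ (by rwa [det_conjTranspose, isUnit_star])]

/-- The Möbius action of `U(L,L)` preserves the strata of the boundary of the matrix
unit disc: if `rank(1 - U*U) = L - l` then the same holds for `T·U = (AU+B)(CU+D)⁻¹`. -/
theorem stmt9 (L l : ℕ) (A B C D U : Matrix (Fin L) (Fin L) ℂ)
    (hT : (Matrix.fromBlocks A B C D)ᴴ * Gmat L * Matrix.fromBlocks A B C D = Gmat L)
    (hU : (1 - Uᴴ * U).PosSemidef)
    (hrank : (1 - Uᴴ * U).rank = L - l) :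
    (1 - ((A * U + B) * (C * U + D)⁻¹)ᴴ * ((A * U + B) * (C * U + D)⁻¹)).rank = L - l := by
  obtain ⟨h₁₁, h₁₂, -, h₂₂⟩ : Aᴴ * A - Cᴴ * C = 1 ∧ Aᴴ * B - Cᴴ * D = 0 ∧
      Bᴴ * A - Dᴴ * C = 0 ∧ Bᴴ * B - Dᴴ * D = -1 := by
    rw [← fromBlocks_inj, ← fromBlocks_conjTranspose_mul_Gmat_mul, hT, Gmat]
  have hkey : (C * U + D)ᴴ * (C * U + D) = (A * U + B)ᴴ * (A * U + B) + (1 - Uᴴ * U) :=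
    star_mobius_denominator_mul_self h₁₁ h₁₂ h₂₂
  have hM : IsUnit (C * U + D).det :=
    isUnit_det_mobius_denominator (isUnit_det_of_conjTranspose_mul_mul_eq (isUnit_det_Gmat L) hT)
      fun _ hv => mulVec_eq_zero_of_conjTranspose_mul_self_eq_add hU hkey hv
  rw [one_sub_conjTranspose_mul_self_mul_inv hM hkey,
    rank_conjTranspose_mul_mul_of_isUnit_det (isUnit_nonsing_inv_det _ hM), hrank]
end
end

section
/- For T = ((A,B),(C,D)) ∈ U(L,L,ℝ), meaning T ∈ U(L,L) with additionally C = conj(B) and D = conj(A), and for a symmetric matrix U with U*U ≤ 1, the Möbius transform T·U = (AU+B)(conj(B)U + conj(A))^{-1} is again symmetric. -/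
open Matrix
open scoped ComplexOrder

noncomputable section

/-!
Write `K` for the block swap. Since `conj T = K T K`, the condition `Tᴴ G T = G` becomes
`Tᵀ (K G) T = K G` with `K G = J`: the matrix `T` is symplectic. A symmetric `U` is exactly one
whose graph `X = [U; 1]` is isotropic, `Xᵀ J X = U - Uᵀ = 0`, and symplectic maps preserve
isotropy. Hence `T X = [N; M]` with `N = AU + B`, `M = conj(B) U + conj(A)` satisfies
`Mᵀ N = Nᵀ M`, which makes `N M⁻¹` symmetric.
-/

namespace Matrix

variable {l m n R : Type*} [Fintype l] [DecidableEq l] [CommRing R]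

theorem transpose_fromRows_mul_J_mul_fromRows (P Q : Matrix l m R) :
    (fromRows P Q)ᵀ * J l R * fromRows P Q = Qᵀ * P - Pᵀ * Q := by
  rw [transpose_fromRows, J, Matrix.mul_assoc, fromBlocks_mul_fromRows, fromCols_mul_fromRows]
  simp only [Matrix.zero_mul, Matrix.neg_mul, Matrix.one_mul, zero_add, add_zero, Matrix.mul_neg]
  abel

theorem SymplecticGroup.transpose_mul_J_mul_mul {T : Matrix (l ⊕ l) (l ⊕ l) R}
    (hT : T ∈ symplecticGroup l R) (X : Matrix (l ⊕ l) m R) :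
    (T * X)ᵀ * J l R * (T * X) = Xᵀ * J l R * X := by
  calc (T * X)ᵀ * J l R * (T * X) = Xᵀ * (Tᵀ * J l R * T) * X := by
        simp only [transpose_mul, Matrix.mul_assoc]
    _ = Xᵀ * J l R * X := by rw [SymplecticGroup.mem_iff'.mp hT]

theorem isSymm_mul_nonsing_inv_of_transpose_mul_comm [Fintype n] [DecidableEq n]
    {M N : Matrix n n R} (h : Nᵀ * M = Mᵀ * N) : (N * M⁻¹).IsSymm := by
  by_cases hM : IsUnit M.det
  · have hMt : IsUnit Mᵀ.det := by rwa [det_transpose]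
    calc (N * M⁻¹)ᵀ = (Mᵀ)⁻¹ * (Nᵀ * M) * M⁻¹ := by
          rw [transpose_mul, transpose_nonsing_inv, Matrix.mul_assoc, Matrix.mul_assoc,
            mul_nonsing_inv _ hM, Matrix.mul_one]
      _ = N * M⁻¹ := by
          rw [h, ← Matrix.mul_assoc, nonsing_inv_mul _ hMt, Matrix.one_mul]
  · rw [nonsing_inv_apply_not_isUnit _ hM, Matrix.mul_zero]
    exact isSymm_zero

end Matrix

theorem fromBlocks_conj_mem_symplecticGroup {L : ℕ} {A B : Matrix (Fin L) (Fin L) ℂ}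
    (hT : (fromBlocks A B (B.map (starRingEnd ℂ)) (A.map (starRingEnd ℂ)))ᴴ * Gmat L *
        fromBlocks A B (B.map (starRingEnd ℂ)) (A.map (starRingEnd ℂ)) = Gmat L) :
    fromBlocks A B (B.map (starRingEnd ℂ)) (A.map (starRingEnd ℂ)) ∈
      symplecticGroup (Fin L) ℂ := by
  set T := fromBlocks A B (B.map (starRingEnd ℂ)) (A.map (starRingEnd ℂ))
  set K : Matrix (Fin L ⊕ Fin L) (Fin L ⊕ Fin L) ℂ := fromBlocks 0 1 1 0
  have hKK : K * K = 1 := by simp [K, fromBlocks_multiply, fromBlocks_one]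
  have hKG : K * Gmat L = J (Fin L) ℂ := by simp [K, Gmat, J, fromBlocks_multiply]
  have hTH : Tᴴ = K * Tᵀ * K := by
    simp only [T, K, fromBlocks_conjTranspose, fromBlocks_transpose, fromBlocks_multiply,
      Matrix.zero_mul, Matrix.one_mul, Matrix.mul_zero, Matrix.mul_one, zero_add, add_zero,
      fromBlocks_inj]
    refine ⟨?_, ?_, ?_, ?_⟩ <;> ext i j <;> simp
  rw [SymplecticGroup.mem_iff']
  calc Tᵀ * J (Fin L) ℂ * T = (K * K) * Tᵀ * (K * Gmat L) * T := by
        rw [hKK, hKG, Matrix.one_mul]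
    _ = K * (Tᴴ * Gmat L * T) := by rw [hTH]; simp only [Matrix.mul_assoc]
    _ = J (Fin L) ℂ := by rw [hT, hKG]

theorem stmt10_general (L : ℕ) (A B U : Matrix (Fin L) (Fin L) ℂ)
    (hT : (Matrix.fromBlocks A B (B.map (starRingEnd ℂ)) (A.map (starRingEnd ℂ)))ᴴ * Gmat L *
        Matrix.fromBlocks A B (B.map (starRingEnd ℂ)) (A.map (starRingEnd ℂ)) = Gmat L)
    (hsym : Uᵀ = U) :
    ((A * U + B) * (B.map (starRingEnd ℂ) * U + A.map (starRingEnd ℂ))⁻¹)ᵀ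
      = (A * U + B) * (B.map (starRingEnd ℂ) * U + A.map (starRingEnd ℂ))⁻¹ := by
  set T := fromBlocks A B (B.map (starRingEnd ℂ)) (A.map (starRingEnd ℂ))
  set X : Matrix (Fin L ⊕ Fin L) (Fin L) ℂ := fromRows U 1
  apply isSymm_mul_nonsing_inv_of_transpose_mul_comm
  have hgraph :
      T * X = fromRows (A * U + B) (B.map (starRingEnd ℂ) * U + A.map (starRingEnd ℂ)) := by
    rw [fromBlocks_mul_fromRows, Matrix.mul_one, Matrix.mul_one]
  have hform := SymplecticGroup.transpose_mul_J_mul_mul (fromBlocks_conj_mem_symplecticGroup hT) X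
  rw [hgraph, transpose_fromRows_mul_J_mul_fromRows, transpose_fromRows_mul_J_mul_fromRows,
    transpose_one, Matrix.one_mul, Matrix.mul_one, hsym, sub_self, sub_eq_zero] at hform
  exact hform.symm

/-- For `T = ((A,B),(conj B, conj A)) ∈ U(L,L,ℝ)` and a symmetric `U` with `U*U ≤ 1`,
the Möbius transform `(AU+B)(conj(B)U + conj(A))⁻¹` is again symmetric. -/
theorem stmt10 (L : ℕ) (A B U : Matrix (Fin L) (Fin L) ℂ)
    (hT : (Matrix.fromBlocks A B (B.map (starRingEnd ℂ)) (A.map (starRingEnd ℂ)))ᴴ * Gmat L *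
        Matrix.fromBlocks A B (B.map (starRingEnd ℂ)) (A.map (starRingEnd ℂ)) = Gmat L)
    (hsym : Uᵀ = U)
    (hU : (1 - Uᴴ * U).PosSemidef) :
    ((A * U + B) * (B.map (starRingEnd ℂ) * U + A.map (starRingEnd ℂ))⁻¹)ᵀ
      = (A * U + B) * (B.map (starRingEnd ℂ) * U + A.map (starRingEnd ℂ))⁻¹ :=
  stmt10_general L A B U hT hsym
end
end

section
/- Let Φ and Ψ be 2L×L complex matrices of rank L representing Lagrangian planes, and define the Wronskian W(Φ,Ψ) = Φ*JΨ. Then dim(range(Φ) ∩ range(Ψ)) = dim ker W(Φ,Ψ). In particular, the two planes intersect nontrivially if and only if det W(Φ,Ψ) = 0, and W(Φ,Ψ) = 0 if and only if the planes coincide. -/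
/-!
For a Lagrangian frame `Φ`, `J` maps `range Φ` into `ker Φ*`, and both spaces have dimension `L`,
so `ker Φ* = J (range Φ)`. Hence `W c = Φ* J (Ψ c)` vanishes iff `Ψ c ∈ range Φ`, i.e.
`ker W = Ψ⁻¹ (range Φ)`, which the injective `Ψ` maps isomorphically onto `range Φ ∩ range Ψ`.
The determinant criterion follows, and `W = 0` says `range Ψ ⊆ range Φ`, an equality since both
planes have dimension `L`.
-/

open Matrix

noncomputable section

open Module

theorem Submodule.finrank_comap_eq_finrank_range_inf {K V W : Type*} [DivisionRing K]
    [AddCommGroup V] [Module K V] [AddCommGroup W] [Module K W]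
    {f : V →ₗ[K] W} (hf : Function.Injective f) (p : Submodule K W) :
    finrank K (p.comap f) = finrank K ↥(LinearMap.range f ⊓ p) := by
  rw [← Submodule.map_comap_eq, (Submodule.equivMapOfInjective f hf _).finrank_eq]

namespace Matrix

variable {m n R : Type*} [Fintype n] [Field R]

theorem mulVecLin_injective_of_rank_eq_card {A : Matrix m n R} (h : A.rank = Fintype.card n) :
    Function.Injective A.mulVecLin := by
  have := LinearMap.finrank_range_add_finrank_ker A.mulVecLin
  rw [← LinearMap.ker_eq_bot, ← Submodule.finrank_eq_zero (R := R)]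
  simp_all [Matrix.rank]

variable [Fintype m] [DecidableEq m] [PartialOrder R] [StarRing R] [StarOrderedRing R]

theorem ker_conjTranspose_eq_map_range {A : Matrix m n R} {J : Matrix m m R} (hJ : IsUnit J)
    (hA : Aᴴ * J * A = 0) (hrank : A.rank + A.rank = Fintype.card m) :
    LinearMap.ker Aᴴ.mulVecLin = (LinearMap.range A.mulVecLin).map J.mulVecLin := by
  refine (Submodule.eq_of_le_of_finrank_le ?_ ?_).symm
  · rintro _ ⟨_, ⟨x, rfl⟩, rfl⟩
    simp [mulVec_mulVec, ← Matrix.mul_assoc, hA]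
  · have hsum := LinearMap.finrank_range_add_finrank_ker Aᴴ.mulVecLin
    have hrankH : finrank R (LinearMap.range Aᴴ.mulVecLin) = A.rank := A.rank_conjTranspose
    simp only [finrank_fintype_fun_eq_card] at hsum
    rw [← (Submodule.equivMapOfInjective _ (mulVec_injective_iff_isUnit.2 hJ) _).finrank_eq]
    change _ ≤ A.rank
    omega

theorem ker_conjTranspose_mul_mul_eq_comap_range {p : Type*} [Fintype p] {Φ : Matrix m n R}
    {Ψ : Matrix m p R} {J : Matrix m m R} (hJ : IsUnit J) (hΦ : Φᴴ * J * Φ = 0)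
    (hΦr : Φ.rank + Φ.rank = Fintype.card m) :
    LinearMap.ker (Φᴴ * J * Ψ).mulVecLin = (LinearMap.range Φ.mulVecLin).comap Ψ.mulVecLin := by
  rw [mulVecLin_mul, mulVecLin_mul, LinearMap.ker_comp, LinearMap.ker_comp,
    ker_conjTranspose_eq_map_range hJ hΦ hΦr,
    Submodule.comap_map_eq_of_injective (mulVec_injective_iff_isUnit.2 hJ)]

end Matrix

theorem isUnit_Jmat (L : ℕ) : IsUnit (Jmat L) :=
  (isUnit_iff_isUnit_det _).2 (isUnit_det_J (Fin L) ℂ)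

open scoped ComplexOrder

theorem stmt12_general (L : ℕ) (Φ Ψ : Matrix (Fin L ⊕ Fin L) (Fin L) ℂ)
    (hΦr : Φ.rank = L) (hΦ : Φᴴ * Jmat L * Φ = 0)
    (hΨr : Ψ.rank = L) :
    Module.finrank ℂ ↥(LinearMap.range Φ.mulVecLin ⊓ LinearMap.range Ψ.mulVecLin)
      = Module.finrank ℂ ↥(LinearMap.ker (Φᴴ * Jmat L * Ψ).mulVecLin)
    ∧ (LinearMap.range Φ.mulVecLin ⊓ LinearMap.range Ψ.mulVecLin ≠ ⊥
        ↔ (Φᴴ * Jmat L * Ψ).det = 0)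
    ∧ (Φᴴ * Jmat L * Ψ = 0
        ↔ LinearMap.range Φ.mulVecLin = LinearMap.range Ψ.mulVecLin) := by
  have hker := ker_conjTranspose_mul_mul_eq_comap_range (Ψ := Ψ) (isUnit_Jmat L) hΦ
    (by simp [hΦr])
  have hdim : finrank ℂ ↥(LinearMap.range Φ.mulVecLin ⊓ LinearMap.range Ψ.mulVecLin)
      = finrank ℂ (LinearMap.ker (Φᴴ * Jmat L * Ψ).mulVecLin) := by
    rw [hker, Submodule.finrank_comap_eq_finrank_range_inf
      (mulVecLin_injective_of_rank_eq_card (by simpa using hΨr)), inf_comm]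
  refine ⟨hdim, ?_, ?_⟩
  · rw [← exists_mulVec_eq_zero_iff, ne_eq, ← Submodule.finrank_eq_zero (R := ℂ), hdim,
      Submodule.finrank_eq_zero, ← ne_eq, Submodule.ne_bot_iff]
    simp only [LinearMap.mem_ker, mulVecLin_apply]
    exact exists_congr fun _ => and_comm
  · rw [← LinearEquiv.map_eq_zero_iff toLin', toLin'_apply', ← LinearMap.ker_eq_top, hker,
      ← LinearMap.range_le_iff_comap]
    exact ⟨fun h => (Submodule.eq_of_le_of_finrank_eq h (hΨr.trans hΦr.symm)).symm, fun h => h.ge⟩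

/-- For Lagrangian frames `Φ, Ψ` the dimension of the intersection of their column spans
equals the dimension of the kernel of the Wronskian `W(Φ,Ψ) = Φ* J Ψ`; the planes
intersect nontrivially iff `det W = 0`, and `W = 0` iff the planes coincide. -/
theorem stmt12 (L : ℕ) (Φ Ψ : Matrix (Fin L ⊕ Fin L) (Fin L) ℂ)
    (hΦr : Φ.rank = L) (hΦ : Φᴴ * Jmat L * Φ = 0)
    (hΨr : Ψ.rank = L) (hΨ : Ψᴴ * Jmat L * Ψ = 0) :
    Module.finrank ℂ ↥(LinearMap.range Φ.mulVecLin ⊓ LinearMap.range Ψ.mulVecLin)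
      = Module.finrank ℂ ↥(LinearMap.ker (Φᴴ * Jmat L * Ψ).mulVecLin)
    ∧ (LinearMap.range Φ.mulVecLin ⊓ LinearMap.range Ψ.mulVecLin ≠ ⊥
        ↔ (Φᴴ * Jmat L * Ψ).det = 0)
    ∧ (Φᴴ * Jmat L * Ψ = 0
        ↔ LinearMap.range Φ.mulVecLin = LinearMap.range Ψ.mulVecLin) :=
  stmt12_general L Φ Ψ hΦr hΦ hΨr
end
end

section
/- Let V₁, V₂ be selfadjoint and T₁, T₂ positive definite L×L matrices, with associated transfer matrices T_n^E = ((E·1 - V_n)T_n^{-1}, -T_n; T_n^{-1}, 0), n = 1,2, at E ∈ ℝ. Then the 2L×2L matrix (T₂^E)* diag((T₁T₁*)^{-1}, 0) T₂^E + diag((T₂T₂*)^{-1}, 0) is positive definite. -/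
/-! The lower block row of `T^E` is `(T⁻¹, 0)`, so `diag((T T*)⁻¹, 0) = (T^E)* diag(0, 1) T^E`.
Hence the matrix in question is `(T₂^E)* diag((T₁T₁*)⁻¹, 1) T₂^E`: a positive definite
block diagonal matrix conjugated by the invertible matrix `T₂^E`. -/

open Matrix
open scoped ComplexOrder

noncomputable section

def transferM (L : ℕ) (E : ℝ) (V T : Matrix (Fin L) (Fin L) ℂ) :
    Matrix (Fin L ⊕ Fin L) (Fin L ⊕ Fin L) ℂ :=
  Matrix.fromBlocks (((E : ℂ) • 1 - V) * T⁻¹) (-T) T⁻¹ 0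

namespace Matrix

variable {m n R : Type*} [Fintype m] [Fintype n]
  [Ring R] [PartialOrder R] [StarRing R] [IsOrderedAddMonoid R]

theorem PosDef.fromBlocks_zero_zero {A : Matrix m m R} {D : Matrix n n R}
    (hA : A.PosDef) (hD : D.PosDef) : (fromBlocks A 0 0 D).PosDef := by
  refine posDef_iff_dotProduct_mulVec.2 ⟨hA.isHermitian.fromBlocks (by simp) hD.isHermitian, ?_⟩
  intro x hx
  rw [← Sum.elim_comp_inl_inr x, fromBlocks_mulVec, Function.star_sumElim,
    sumElim_dotProduct_sumElim]
  simp only [zero_mulVec, add_zero, zero_add]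
  by_cases hxl : x ∘ Sum.inl = 0
  · have hxr : x ∘ Sum.inr ≠ 0 := fun hxr ↦
      hx (by rw [← Sum.elim_comp_inl_inr x, hxl, hxr, Sum.elim_zero_zero])
    exact add_pos_of_nonneg_of_pos (hA.posSemidef.dotProduct_mulVec_nonneg _)
      (hD.dotProduct_mulVec_pos hxr)
  · exact add_pos_of_pos_of_nonneg (hA.dotProduct_mulVec_pos hxl)
      (hD.posSemidef.dotProduct_mulVec_nonneg _)

end Matrix

theorem transferM_conjTranspose_mul_fromBlocks_zero_one_mul (L : ℕ) (E : ℝ)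
    (V T : Matrix (Fin L) (Fin L) ℂ) :
    (transferM L E V T)ᴴ * fromBlocks 0 0 0 1 * transferM L E V T
      = fromBlocks ((T * Tᴴ)⁻¹) 0 0 0 := by
  simp [transferM, fromBlocks_conjTranspose, fromBlocks_multiply, Matrix.mul_inv_rev,
    conjTranspose_nonsing_inv]

theorem transferM_mulVec_injective (L : ℕ) (E : ℝ) {V T : Matrix (Fin L) (Fin L) ℂ}
    (hT : IsUnit T) : Function.Injective (transferM L E V T).mulVec := by
  rw [← coe_mulVecLin, injective_iff_map_eq_zero]
  intro x hx
  obtain ⟨a, b, rfl⟩ : ∃ a b, x = Sum.elim a b := ⟨_, _, (Sum.elim_comp_inl_inr x).symm⟩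
  rw [coe_mulVecLin, transferM, fromBlocks_mulVec, ← Sum.elim_zero_zero, Sum.elim_eq_iff] at hx
  obtain ⟨htop, hbottom⟩ := hx
  have ha : a = 0 := (mulVec_injective_iff_isUnit.2 (isUnit_nonsing_inv_iff.2 hT)).eq_iff'
    (mulVec_zero _) |>.1 (by simpa using hbottom)
  subst ha
  have hb : b = 0 := (mulVec_injective_iff_isUnit.2 hT).eq_iff' (mulVec_zero _) |>.1
    (by simpa [neg_mulVec] using htop)
  rw [hb, Sum.elim_zero_zero]

theorem stmt15_general (L : ℕ) (E : ℝ) (V₂ T₁ T₂ : Matrix (Fin L) (Fin L) ℂ)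
    (hT₁ : T₁.PosDef) (hT₂ : T₂.PosDef) :
    ((transferM L E V₂ T₂)ᴴ * Matrix.fromBlocks ((T₁ * T₁ᴴ)⁻¹) 0 0 0 * transferM L E V₂ T₂
      + Matrix.fromBlocks ((T₂ * T₂ᴴ)⁻¹) 0 0 0).PosDef := by
  have hP₁ : ((T₁ * T₁ᴴ)⁻¹).PosDef :=
    (PosDef.mul_conjTranspose_self T₁ (vecMul_injective_iff_isUnit.2 hT₁.isUnit)).inv
  rw [← transferM_conjTranspose_mul_fromBlocks_zero_one_mul L E V₂ T₂, ← Matrix.add_mul,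
    ← Matrix.mul_add, fromBlocks_add, add_zero, add_zero, zero_add]
  exact (hP₁.fromBlocks_zero_zero PosDef.one).conjTranspose_mul_mul_same
    (transferM_mulVec_injective L E hT₂.isUnit)

/-- For two transfer matrices, the sum
`(T₂^E)* diag((T₁T₁*)⁻¹,0) T₂^E + diag((T₂T₂*)⁻¹,0)` is positive definite. -/
theorem stmt15 (L : ℕ) (E : ℝ) (V₁ V₂ T₁ T₂ : Matrix (Fin L) (Fin L) ℂ)
    (hV₁ : V₁.IsHermitian) (hV₂ : V₂.IsHermitian)
    (hT₁ : T₁.PosDef) (hT₂ : T₂.PosDef) :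
    ((transferM L E V₂ T₂)ᴴ * Matrix.fromBlocks ((T₁ * T₁ᴴ)⁻¹) 0 0 0 * transferM L E V₂ T₂
      + Matrix.fromBlocks ((T₂ * T₂ᴴ)⁻¹) 0 0 0).PosDef :=
  stmt15_general L E V₂ T₁ T₂ hT₁ hT₂
end
end

section
/- Let Φ^E = M T^E Φ where M is a complex symplectic 2L×2L matrix, T^E the transfer matrix built from selfadjoint V and positive definite T, and Φ a 2L×L rank-L matrix representing a Lagrangian plane with invertible upper block (1 0)Φ. Then (Φ^E)* J (∂_E Φ^E) = Φ* diag(T^{-2}, 0) Φ, and this matrix is positive definite. -/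
open Matrix
open scoped ComplexOrder

noncomputable section

/-!
Symplecticity of `M` removes it from the form, and a block computation gives
`(T^E)* J ∂_E T^E = diag((T⁻¹)* T⁻¹, 0)`. Hence the form is `a* T⁻² a` for the upper block `a`
of `Φ`, which is positive definite because `T⁻²` is and `a` is invertible.
-/

namespace Matrix

variable {R : Type*} {m n k l p : Type*} [Fintype m] [Fintype n]

theorem conjTranspose_mul_mul_mul_cancel_of_isometry [Semiring R] [StarRing R]
    {M J : Matrix m m R} (hM : Mᴴ * J * M = J) (A : Matrix m k R) (B : Matrix m l R) :
    (M * A)ᴴ * J * (M * B) = Aᴴ * J * B := by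
  simp only [conjTranspose_mul, Matrix.mul_assoc]
  rw [← Matrix.mul_assoc Mᴴ, ← Matrix.mul_assoc (Mᴴ * J), hM]

theorem conjTranspose_mul_fromBlocks_zero_mul [Semiring R] [StarRing R] (P : Matrix m m R)
    (Φ : Matrix (m ⊕ n) p R) :
    Φᴴ * (fromBlocks P 0 0 0 : Matrix (m ⊕ n) (m ⊕ n) R) * Φ
      = (Φ.submatrix Sum.inl id)ᴴ * P * Φ.submatrix Sum.inl id := by
  ext i j
  simp [Matrix.mul_apply, Fintype.sum_sum_type]

end Matrix

/-- `fromBlocks T⁻¹ 0 0 0` is `∂_E T^E`: only the block `(E - V) T⁻¹` depends on `E`. -/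
theorem conjTranspose_transferM_mul_Jmat_mul (L : ℕ) (E : ℝ) (V T : Matrix (Fin L) (Fin L) ℂ) :
    (transferM L E V T)ᴴ * Jmat L * fromBlocks T⁻¹ 0 0 0 = fromBlocks ((T⁻¹)ᴴ * T⁻¹) 0 0 0 := by
  simp [transferM, Jmat, fromBlocks_conjTranspose, fromBlocks_multiply]

theorem stmt16_general (L : ℕ) (E : ℝ) (M : Matrix (Fin L ⊕ Fin L) (Fin L ⊕ Fin L) ℂ)
    (hM : Mᴴ * Jmat L * M = Jmat L)
    (V T : Matrix (Fin L) (Fin L) ℂ) (hT : T.PosDef)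
    (Φ : Matrix (Fin L ⊕ Fin L) (Fin L) ℂ)
    (ha : IsUnit (Φ.submatrix Sum.inl (id : Fin L → Fin L))) :
    (M * transferM L E V T * Φ)ᴴ * Jmat L * (M * Matrix.fromBlocks T⁻¹ 0 0 0 * Φ)
      = Φᴴ * (Matrix.fromBlocks (T⁻¹ * T⁻¹) 0 0 0 : Matrix (Fin L ⊕ Fin L) (Fin L ⊕ Fin L) ℂ) * Φ
    ∧ (Φᴴ * (Matrix.fromBlocks (T⁻¹ * T⁻¹) 0 0 0 : Matrix (Fin L ⊕ Fin L) (Fin L ⊕ Fin L) ℂ) * Φ).PosDef := by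
  have hTinv : (T⁻¹)ᴴ = T⁻¹ := by rw [conjTranspose_nonsing_inv, hT.1.eq]
  have hTinv_sq : (T⁻¹ * T⁻¹).PosDef := by
    simpa only [hTinv] using
      PosDef.conjTranspose_mul_self _ (mulVec_injective_of_isUnit hT.inv.isUnit)
  constructor
  · calc (M * transferM L E V T * Φ)ᴴ * Jmat L * (M * fromBlocks T⁻¹ 0 0 0 * Φ)
        = Φᴴ * ((M * transferM L E V T)ᴴ * Jmat L * (M * fromBlocks T⁻¹ 0 0 0)) * Φ := by
          simp only [conjTranspose_mul, Matrix.mul_assoc]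
      _ = _ := by
          rw [conjTranspose_mul_mul_mul_cancel_of_isometry hM,
            conjTranspose_transferM_mul_Jmat_mul, hTinv]
  · rw [conjTranspose_mul_fromBlocks_zero_mul]
    exact hTinv_sq.conjTranspose_mul_mul_same (mulVec_injective_of_isUnit ha)

/-- For `Φ^E = M T^E Φ` with `M` symplectic, `T^E` a transfer matrix and `Φ` a Lagrangian
frame with invertible upper block, `(Φ^E)* J (∂_E Φ^E) = Φ* diag(T⁻², 0) Φ`, and this
matrix is positive definite. -/
theorem stmt16 (L : ℕ) (E : ℝ) (M : Matrix (Fin L ⊕ Fin L) (Fin L ⊕ Fin L) ℂ)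
    (hM : Mᴴ * Jmat L * M = Jmat L)
    (V T : Matrix (Fin L) (Fin L) ℂ) (hV : V.IsHermitian) (hT : T.PosDef)
    (Φ : Matrix (Fin L ⊕ Fin L) (Fin L) ℂ)
    (hr : Φ.rank = L) (hLag : Φᴴ * Jmat L * Φ = 0)
    (ha : IsUnit (Φ.submatrix Sum.inl (id : Fin L → Fin L))) :
    (M * transferM L E V T * Φ)ᴴ * Jmat L * (M * Matrix.fromBlocks T⁻¹ 0 0 0 * Φ)
      = Φᴴ * (Matrix.fromBlocks (T⁻¹ * T⁻¹) 0 0 0 : Matrix (Fin L ⊕ Fin L) (Fin L ⊕ Fin L) ℂ) * Φ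
    ∧ (Φᴴ * (Matrix.fromBlocks (T⁻¹ * T⁻¹) 0 0 0 : Matrix (Fin L ⊕ Fin L) (Fin L ⊕ Fin L) ℂ) * Φ).PosDef :=
  stmt16_general L E M hM V T hT Φ ha
end
end
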